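/- Let Q(ω) be a convex quadratic with minimizer ω₀, let E = {ω : h(ω) = 0} where h is a quadratic form with h(ω₀) > 0, and let R(ω) = Q(ω) + h(ω)². Suppose every global minimizer of R lies in {ω : h(ω) < 0}. Then for any global minimizer ω_min there exists ω' on the segment [ω₀, ω_min] with h(ω') = 0 and R(ω') < R(ω_min), a contradiction; hence R has a global minimizer in {ω : h(ω) ≥ 0}. -/

import Mathlib

/-!
At the minimizer `ω₀` the linear part of `Q` vanishes, so `Q (ω₀ + w) = Q ω₀ + wᵀ A w`. Since `A`
is positive definite, `R ≥ Q` grows quadratically away from `ω₀` and attains its minimum at some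
`m`. If `h m < 0`, then, as `h ω₀ > 0`, the intermediate value theorem gives `m'` on the segment
`[ω₀, m]` with `h m' = 0`; and `Q (ω₀ + t w) = Q ω₀ + t² wᵀ A w` increases along that segment, so
`R m' = Q m' ≤ Q m ≤ R m` and `m'` is a global minimizer with `h m' = 0`.
-/

open Matrix Filter Topology

theorem tendsto_norm_sub_cocompact_atTop {E : Type*} [NormedAddCommGroup E] [ProperSpace E]
    (x₀ : E) : Tendsto (fun x => ‖x - x₀‖) (cocompact E) atTop :=
  tendsto_norm_cocompact_atTop.comp (Homeomorph.subRight x₀).isClosedEmbedding.tendsto_cocompact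

theorem Continuous.exists_forall_le_of_add_mul_sq_norm_sub_le {E : Type*} [NormedAddCommGroup E]
    [ProperSpace E] {f : E → ℝ} (hf : Continuous f) {x₀ : E} {a c : ℝ} (hc : 0 < c)
    (hle : ∀ x, a + c * ‖x - x₀‖ ^ 2 ≤ f x) : ∃ m, ∀ x, f m ≤ f x := by
  have hsq : Tendsto (fun x => c * ‖x - x₀‖ ^ 2) (cocompact E) atTop :=
    ((tendsto_pow_atTop two_ne_zero).comp (tendsto_norm_sub_cocompact_atTop x₀)).const_mul_atTop hc
  exact hf.exists_forall_le (tendsto_atTop_mono hle (tendsto_atTop_add_const_left _ a hsq))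

theorem exists_pos_mul_sq_norm_le_of_homogeneous {E : Type*} [NormedAddCommGroup E]
    [NormedSpace ℝ E] [FiniteDimensional ℝ E] {g : E → ℝ} (hg : Continuous g)
    (hpos : ∀ x ≠ 0, 0 < g x) (hsmul : ∀ (s : ℝ) x, g (s • x) = s ^ 2 * g x) :
    ∃ c > 0, ∀ x, c * ‖x‖ ^ 2 ≤ g x := by
  have hg0 : g 0 = 0 := by simpa using hsmul 0 0
  rcases subsingleton_or_nontrivial E with hE | hE
  · exact ⟨1, one_pos, fun x => by simp [Subsingleton.elim x 0, hg0]⟩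
  obtain ⟨u, hu, hmin⟩ := (isCompact_sphere (0 : E) 1).exists_isMinOn
    (NormedSpace.sphere_nonempty.mpr zero_le_one) hg.continuousOn
  have hu0 : u ≠ 0 := ne_zero_of_mem_unit_sphere ⟨u, hu⟩
  refine ⟨g u, hpos u hu0, fun x => ?_⟩
  rcases eq_or_ne x 0 with rfl | hx
  · simp [hg0]
  have hnx : ‖x‖ ≠ 0 := norm_ne_zero_iff.mpr hx
  have hunit : ‖x‖⁻¹ • x ∈ Metric.sphere (0 : E) 1 := by
    simp [norm_smul, hnx]
  calc g u * ‖x‖ ^ 2 ≤ g (‖x‖⁻¹ • x) * ‖x‖ ^ 2 := by gcongr; exact hmin hunit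
    _ = g x := by
      rw [hsmul, inv_pow, mul_comm, ← mul_assoc, mul_inv_cancel₀ (pow_ne_zero 2 hnx), one_mul]

theorem Matrix.PosDef.exists_pos_mul_sq_norm_le {n : Type*} [Fintype n] {A : Matrix n n ℝ}
    (hA : A.PosDef) : ∃ c > 0, ∀ x, c * ‖x‖ ^ 2 ≤ x ⬝ᵥ A *ᵥ x :=
  exists_pos_mul_sq_norm_le_of_homogeneous (by simp only [dotProduct, mulVec]; fun_prop)
    (fun x hx => by simpa using hA.dotProduct_mulVec_pos hx)
    (fun s x => by simp only [mulVec_smul, smul_dotProduct, dotProduct_smul, smul_eq_mul]; ring)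

section Quadratic

variable {n : Type*} [Fintype n] (M : Matrix n n ℝ) (v : n → ℝ) (c : ℝ)

def quadraticFun (x : n → ℝ) : ℝ := x ⬝ᵥ M *ᵥ x + v ⬝ᵥ x + c

theorem continuous_quadraticFun : Continuous (quadraticFun M v c) := by
  unfold quadraticFun
  simp only [dotProduct, mulVec]
  fun_prop

theorem quadraticFun_add_smul (x w : n → ℝ) (t : ℝ) :
    quadraticFun M v c (x + t • w) = quadraticFun M v c x
      + t * (x ⬝ᵥ M *ᵥ w + w ⬝ᵥ M *ᵥ x + v ⬝ᵥ w) + t ^ 2 * (w ⬝ᵥ M *ᵥ w) := by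
  simp only [quadraticFun, add_dotProduct, dotProduct_add, mulVec_add, mulVec_smul,
    smul_dotProduct, dotProduct_smul, smul_eq_mul]
  ring

variable {M v c} {x : n → ℝ}

theorem quadraticFun_add_of_forall_le (hmin : ∀ y, quadraticFun M v c x ≤ quadraticFun M v c y)
    (w : n → ℝ) : quadraticFun M v c (x + w) = quadraticFun M v c x + w ⬝ᵥ M *ᵥ w := by
  -- `t ↦ f (x + t • w) - f x` is a nonnegative quadratic with no constant term.
  have hnonneg (t : ℝ) :
      0 ≤ (w ⬝ᵥ M *ᵥ w) * (t * t) + (x ⬝ᵥ M *ᵥ w + w ⬝ᵥ M *ᵥ x + v ⬝ᵥ w) * t + 0 := by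
    linarith [hmin (x + t • w), quadraticFun_add_smul M v c x w t]
  have hlinear : x ⬝ᵥ M *ᵥ w + w ⬝ᵥ M *ᵥ x + v ⬝ᵥ w = 0 := by
    have := discrim_le_zero hnonneg
    rw [discrim] at this
    nlinarith
  simpa [hlinear] using quadraticFun_add_smul M v c x w 1

theorem quadraticFun_le_of_mem_segment (hmin : ∀ y, quadraticFun M v c x ≤ quadraticFun M v c y)
    {y z : n → ℝ} (hz : z ∈ segment ℝ x y) : quadraticFun M v c z ≤ quadraticFun M v c y := by
  rw [segment_eq_image'] at hz
  obtain ⟨t, ⟨ht₀, ht₁⟩, rfl⟩ := hz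
  generalize hw : y - x = w
  obtain rfl : y = x + w := by rw [← hw, add_sub_cancel]
  have hgap : 0 ≤ w ⬝ᵥ M *ᵥ w := by
    linarith [hmin (x + w), quadraticFun_add_of_forall_le hmin w]
  have ht : t ^ 2 ≤ 1 := pow_le_one₀ ht₀ ht₁
  rw [quadraticFun_add_of_forall_le hmin, quadraticFun_add_of_forall_le hmin]
  simp only [dotProduct_smul, mulVec_smul, smul_dotProduct, smul_eq_mul]
  nlinarith

end Quadratic

/-- If `Q` is a (strictly) convex quadratic with minimizer `ω₀`, `h` is a
quadratic function with `h(ω₀) > 0`, and `R = Q + h²` (the prediction risk),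
then `R` has a global minimizer in the region `{ω : h(ω) ≥ 0}` (weakly outside
the ellipse `{h = 0}`). -/
theorem risk_minimizer_outside_ellipse {d : ℕ}
    (A : Matrix (Fin d) (Fin d) ℝ) (hA : A.PosDef) (b : Fin d → ℝ) (q₀ : ℝ)
    (B : Matrix (Fin d) (Fin d) ℝ) (u : Fin d → ℝ) (e : ℝ)
    (Q h R : (Fin d → ℝ) → ℝ)
    (hQ : ∀ ω, Q ω = ω ⬝ᵥ A.mulVec ω + b ⬝ᵥ ω + q₀)
    (hh : ∀ ω, h ω = ω ⬝ᵥ B.mulVec ω + u ⬝ᵥ ω + e)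
    (hR : ∀ ω, R ω = Q ω + (h ω) ^ 2)
    (ω₀ : Fin d → ℝ) (hω₀ : ∀ ω, Q ω₀ ≤ Q ω)
    (hover : 0 < h ω₀) :
    ∃ m : Fin d → ℝ, (∀ ω, R m ≤ R ω) ∧ 0 ≤ h m := by
  obtain rfl : Q = quadraticFun A b q₀ := funext hQ
  obtain rfl : h = quadraticFun B u e := funext hh
  have hQR (ω) : quadraticFun A b q₀ ω ≤ R ω := by
    rw [hR]; exact le_add_of_nonneg_right (sq_nonneg _)
  have hRc : Continuous R := by
    rw [show R = _ from funext hR]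
    exact (continuous_quadraticFun A b q₀).add ((continuous_quadraticFun B u e).pow 2)
  obtain ⟨c, hc, hcoer⟩ := hA.exists_pos_mul_sq_norm_le
  obtain ⟨m, hm⟩ := hRc.exists_forall_le_of_add_mul_sq_norm_sub_le hc fun ω => by
    calc quadraticFun A b q₀ ω₀ + c * ‖ω - ω₀‖ ^ 2
        ≤ quadraticFun A b q₀ (ω₀ + (ω - ω₀)) := by
          rw [quadraticFun_add_of_forall_le hω₀]; linarith [hcoer (ω - ω₀)]
      _ ≤ R ω := by rw [add_sub_cancel]; exact hQR ω
  by_cases hhm : 0 ≤ quadraticFun B u e m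
  · exact ⟨m, hm, hhm⟩
  obtain ⟨m', hm'seg, hm'zero⟩ : ∃ m' ∈ segment ℝ ω₀ m, quadraticFun B u e m' = 0 :=
    (convex_segment ω₀ m).isPreconnected.intermediate_value (right_mem_segment ℝ ω₀ m)
      (left_mem_segment ℝ ω₀ m) (continuous_quadraticFun B u e).continuousOn
      ⟨(not_le.mp hhm).le, hover.le⟩
  have hRm' : R m' ≤ R m :=
    calc R m' = quadraticFun A b q₀ m' := by simp [hR, hm'zero]
      _ ≤ quadraticFun A b q₀ m := quadraticFun_le_of_mem_segment hω₀ hm'seg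
      _ ≤ R m := hQR m
  exact ⟨m', fun ω => hRm'.trans (hm ω), hm'zero.ge⟩
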